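/- Let θ₁, θ₂ ∈ ℝ with e^{iθ₁} ≠ e^{iθ₂}, let w₁, w₂ be 2×2 unitaries, and let R = diag(1, 1, e^{iθ₁}, e^{iθ₂}) be the 4×4 diagonal unitary on ℂ²⊗ℂ² (basis |00⟩,|01⟩,|10⟩,|11⟩). If there exists a 4×4 unitary U such that U (I₂ ⊗ w₂) U† = (I₂ ⊗ w₁) R, then e^{i(θ₁+θ₂)} = 1. -/
import Mathlib


open Matrix

noncomputable section

/-- `I₂ ⊗ w`: the Kronecker product of the 2×2 identity with a 2×2 matrix `w`, acting on the
second tensor factor of `ℂ² ⊗ ℂ²`. -/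
def idKron (w : Matrix (Fin 2) (Fin 2) ℂ) :
    Matrix (Fin 2 × Fin 2) (Fin 2 × Fin 2) ℂ :=
  Matrix.of fun p q => (if p.1 = q.1 then 1 else 0) * w p.2 q.2

/-- The 4×4 diagonal unitary `R = diag(1, 1, e^{iθ₁}, e^{iθ₂})` on `ℂ² ⊗ ℂ²`
(basis `|00⟩,|01⟩,|10⟩,|11⟩`). -/
def Rgate (θ₁ θ₂ : ℝ) : Matrix (Fin 2 × Fin 2) (Fin 2 × Fin 2) ℂ :=
  Matrix.diagonal fun p =>
    if p = (1, 0) then Complex.exp (θ₁ * Complex.I)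
    else if p = (1, 1) then Complex.exp (θ₂ * Complex.I) else 1

/-- If `c`, `r`, `s` are all roots of `X² - tX + d` with `r ≠ s` and `2c + r + s = 2t`,
we get a contradiction (since then `t = r + s`, `d = rs`, `c ∈ {r, s}` and `2c = r + s`). -/
lemma auxRoots (t d c r s : ℂ) (hrs : r ≠ s)
    (h1 : c*c - t*c + d = 0) (h2 : r*r - t*r + d = 0) (h3 : s*s - t*s + d = 0)
    (htr : 2*c + r + s = 2*t) : False := by
  have ht : t = r + s := by
    have h : (r - s) * (r + s - t) = 0 := by linear_combination h2 - h3
    rcases mul_eq_zero.mp h with h | h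
    · exact absurd (sub_eq_zero.mp h) hrs
    · exact (sub_eq_zero.mp h).symm
  have hd : d = r * s := by linear_combination h2 + r * ht
  have hc : (c - r) * (c - s) = 0 := by linear_combination h1 + c*ht - hd
  have h2c : 2*c = r + s := by linear_combination htr + 2*ht
  rcases mul_eq_zero.mp hc with h | h
  · exact hrs (by linear_combination h2c - 2*h)
  · exact hrs (by linear_combination 2*h - h2c)

/-- The scalar core of the argument.  `a b c dd` are the entries of `w₁`, `e₁ e₂` the two
phases, `t = tr w₂`, `d₀ = det w₂`.  The `F` equations say that `w₁` satisfies
`X² - tX + d₀`, the `G` equations say that `w₁ ⬝ diag(e₁,e₂)` satisfies the same quadratic,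
and `htr` equates the traces of the two conjugate matrices. -/
lemma keyScalar (a b c dd e₁ e₂ t d₀ : ℂ) (he : e₁ ≠ e₂) (he₁ : e₁ ≠ 0) (he₂ : e₂ ≠ 0)
    (hdet : a*dd - b*c ≠ 0)
    (F00 : a*a + b*c - t*a + d₀ = 0)
    (F01 : a*b + b*dd - t*b = 0)
    (F10 : c*a + dd*c - t*c = 0)
    (F11 : c*b + dd*dd - t*dd + d₀ = 0)
    (G00 : (a*e₁)*(a*e₁) + (b*e₂)*(c*e₁) - t*(a*e₁) + d₀ = 0)
    (G01 : (a*e₁)*(b*e₂) + (b*e₂)*(dd*e₂) - t*(b*e₂) = 0)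
    (G10 : (c*e₁)*(a*e₁) + (dd*e₂)*(c*e₁) - t*(c*e₁) = 0)
    (G11 : (c*e₁)*(b*e₂) + (dd*e₂)*(dd*e₂) - t*(dd*e₂) + d₀ = 0)
    (htr : a + dd + (a*e₁ + dd*e₂) = 2*t) : e₁*e₂ = 1 := by
  by_cases h0 : a + dd - t = 0
  · have hd0 : d₀ = a*dd - b*c := by linear_combination F00 - a*h0
    by_cases h1 : a*e₁ + dd*e₂ - t = 0
    · have hd1 : d₀ = e₁*e₂*(a*dd - b*c) := by linear_combination G00 - (a*e₁)*h1
      have hz : (a*dd - b*c) * (e₁*e₂ - 1) = 0 := by linear_combination hd0 - hd1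
      rcases mul_eq_zero.mp hz with h | h
      · exact absurd h hdet
      · linear_combination h
    · -- second block is the scalar matrix (a*e₁)•1
      exfalso
      have hb : b = 0 := by
        have hz : b*(e₂*(a*e₁ + dd*e₂ - t)) = 0 := by linear_combination G01
        rcases mul_eq_zero.mp hz with h | h
        · exact h
        · rcases mul_eq_zero.mp h with h | h
          exacts [absurd h he₂, absurd h h1]
      have hcz : c = 0 := by
        have hz : c*(e₁*(a*e₁ + dd*e₂ - t)) = 0 := by linear_combination G10
        rcases mul_eq_zero.mp hz with h | h
        · exact h
        · rcases mul_eq_zero.mp h with h | h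
          exacts [absurd h he₁, absurd h h1]
      have hsc : a*e₁ = dd*e₂ := by
        have hz : (a*e₁ - dd*e₂) * (a*e₁ + dd*e₂ - t) = 0 := by linear_combination G00 - G11
        rcases mul_eq_zero.mp hz with h | h
        · exact sub_eq_zero.mp h
        · exact absurd h h1
      have hrs : a ≠ dd := by
        intro heq
        have hz : a*(e₁ - e₂) = 0 := by linear_combination hsc - e₂*heq
        rcases mul_eq_zero.mp hz with h | h
        · exact hdet (by rw [h, hb]; rw [h] at heq; rw [← heq]; ring)
        · exact he (sub_eq_zero.mp h)
      exact auxRoots t d₀ (a*e₁) a dd hrs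
        (by linear_combination G00 - (c*e₁*e₂)*hb)
        (by linear_combination F00 - c*hb)
        (by linear_combination F11 - b*hcz)
        (by linear_combination htr + hsc)
  · -- first block is the scalar matrix a•1
    exfalso
    have hb : b = 0 := by
      have hz : b*(a + dd - t) = 0 := by linear_combination F01
      rcases mul_eq_zero.mp hz with h | h
      exacts [h, absurd h h0]
    have hcz : c = 0 := by
      have hz : c*(a + dd - t) = 0 := by linear_combination F10
      rcases mul_eq_zero.mp hz with h | h
      exacts [h, absurd h h0]
    have had : a = dd := by
      have hz : (a - dd)*(a + dd - t) = 0 := by linear_combination F00 - F11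
      rcases mul_eq_zero.mp hz with h | h
      exacts [sub_eq_zero.mp h, absurd h h0]
    have ha0 : a ≠ 0 := by
      intro h
      exact hdet (by rw [hb, h]; ring)
    have hrs : a*e₁ ≠ a*e₂ := fun h => he (mul_left_cancel₀ ha0 h)
    exact auxRoots t d₀ a (a*e₁) (a*e₂) hrs
      (by linear_combination F00 - c*hb)
      (by linear_combination G00 - (c*e₁*e₂)*hb)
      (by linear_combination G11 - (b*e₁*e₂)*hcz + ((a+dd)*e₂^2 - t*e₂)*had)
      (by linear_combination htr + (1 + e₂)*had)

/-- If `e^{iθ₁} ≠ e^{iθ₂}` and some 4×4 unitary `U` conjugates `I₂ ⊗ w₂` into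
`(I₂ ⊗ w₁) R` with `R = diag(1,1,e^{iθ₁},e^{iθ₂})` and `w₁, w₂` 2×2 unitaries,
then `e^{i(θ₁+θ₂)} = 1`. -/
theorem conjugate_local_to_controlled_phase (θ₁ θ₂ : ℝ)
    (hne : Complex.exp (θ₁ * Complex.I) ≠ Complex.exp (θ₂ * Complex.I))
    (w₁ w₂ : Matrix (Fin 2) (Fin 2) ℂ)
    (hw₁ : w₁ ∈ Matrix.unitaryGroup (Fin 2) ℂ) (hw₂ : w₂ ∈ Matrix.unitaryGroup (Fin 2) ℂ)
    (h : ∃ U ∈ Matrix.unitaryGroup (Fin 2 × Fin 2) ℂ,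
      U * idKron w₂ * Uᴴ = idKron w₁ * Rgate θ₁ θ₂) :
    Complex.exp ((θ₁ + θ₂) * Complex.I) = 1 := by
  obtain ⟨U, hU, hconj⟩ := h
  have hU1 : U * Uᴴ = 1 := by
    simpa [Matrix.star_eq_conjTranspose] using Matrix.mem_unitaryGroup_iff.mp hU
  have hU2 : Uᴴ * U = 1 := by
    simpa [Matrix.star_eq_conjTranspose] using Matrix.mem_unitaryGroup_iff'.mp hU
  -- Cayley–Hamilton for `idKron w₂`
  have hA : idKron w₂ * idKron w₂ - w₂.trace • idKron w₂
      + w₂.det • (1 : Matrix (Fin 2 × Fin 2) (Fin 2 × Fin 2) ℂ) = 0 := by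
    ext ⟨i,j⟩ ⟨k,l⟩
    fin_cases i <;> fin_cases j <;> fin_cases k <;> fin_cases l <;>
      simp [idKron, Matrix.mul_apply, Fintype.sum_prod_type, Fin.sum_univ_two,
        Matrix.one_apply, Matrix.trace_fin_two, Matrix.det_fin_two, Prod.ext_iff] <;> ring
  -- the conjugate satisfies the same quadratic
  have hBB : (idKron w₁ * Rgate θ₁ θ₂) * (idKron w₁ * Rgate θ₁ θ₂)
      = U*(idKron w₂ * idKron w₂)*Uᴴ := by
    rw [← hconj]
    calc (U*idKron w₂*Uᴴ)*(U*idKron w₂*Uᴴ)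
        = U*idKron w₂*(Uᴴ*U)*(idKron w₂*Uᴴ) := by simp only [Matrix.mul_assoc]
      _ = U*(idKron w₂ * idKron w₂)*Uᴴ := by
          rw [hU2, Matrix.mul_one]; simp only [Matrix.mul_assoc]
  have hQB : (idKron w₁ * Rgate θ₁ θ₂) * (idKron w₁ * Rgate θ₁ θ₂)
      - w₂.trace • (idKron w₁ * Rgate θ₁ θ₂)
      + w₂.det • (1 : Matrix (Fin 2 × Fin 2) (Fin 2 × Fin 2) ℂ) = 0 := by
    have h1 : (idKron w₁ * Rgate θ₁ θ₂) * (idKron w₁ * Rgate θ₁ θ₂)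
        - w₂.trace • (idKron w₁ * Rgate θ₁ θ₂)
        + w₂.det • (1 : Matrix (Fin 2 × Fin 2) (Fin 2 × Fin 2) ℂ)
        = U*(idKron w₂ * idKron w₂ - w₂.trace • idKron w₂ + w₂.det • 1)*Uᴴ := by
      rw [hBB, ← hconj]
      simp only [Matrix.mul_sub, Matrix.sub_mul, Matrix.mul_add, Matrix.add_mul,
        Matrix.mul_smul, Matrix.smul_mul, Matrix.mul_one, Matrix.mul_assoc, hU1]
    rw [h1, hA]
    simp
  -- traces agree
  have htrB : (idKron w₁ * Rgate θ₁ θ₂).trace = (idKron w₂).trace := by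
    rw [← hconj]
    calc (U*idKron w₂*Uᴴ).trace = (Uᴴ*(U*idKron w₂)).trace := Matrix.trace_mul_comm _ _
      _ = (idKron w₂).trace := by rw [← Matrix.mul_assoc, hU2, Matrix.one_mul]
  -- extract scalar equations
  have hq : ∀ p q, ((idKron w₁ * Rgate θ₁ θ₂)*(idKron w₁ * Rgate θ₁ θ₂)
      - w₂.trace•(idKron w₁ * Rgate θ₁ θ₂)
      + w₂.det•(1 : Matrix (Fin 2 × Fin 2) (Fin 2 × Fin 2) ℂ)) p q = 0 := by
    intro p q; rw [hQB]; rfl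
  have E00 := hq (0,0) (0,0)
  have E01 := hq (0,0) (0,1)
  have E10 := hq (0,1) (0,0)
  have E11 := hq (0,1) (0,1)
  have G00 := hq (1,0) (1,0)
  have G01 := hq (1,0) (1,1)
  have G10 := hq (1,1) (1,0)
  have G11 := hq (1,1) (1,1)
  simp only [idKron, Rgate] at E00 E01 E10 E11 G00 G01 G10 G11 htrB
  simp [Matrix.mul_apply, Matrix.mul_diagonal, Fintype.sum_prod_type,
    Fin.sum_univ_two, Matrix.one_apply, Prod.ext_iff] at E00 E01 E10 E11 G00 G01 G10 G11
  simp [Matrix.trace, Matrix.diag, Matrix.mul_diagonal, Fintype.sum_prod_type,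
    Fin.sum_univ_two, Prod.ext_iff] at htrB
  -- determinant of a unitary is nonzero
  have hw1' : w₁ * w₁ᴴ = 1 := by
    simpa [Matrix.star_eq_conjTranspose] using Matrix.mem_unitaryGroup_iff.mp hw₁
  have hdet : w₁ 0 0 * w₁ 1 1 - w₁ 0 1 * w₁ 1 0 ≠ 0 := by
    have hd : w₁.det * w₁ᴴ.det = 1 := by rw [← Matrix.det_mul, hw1']; simp
    have : w₁.det ≠ 0 := left_ne_zero_of_mul_eq_one hd
    rwa [Matrix.det_fin_two] at this
  have key := keyScalar (w₁ 0 0) (w₁ 0 1) (w₁ 1 0) (w₁ 1 1)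
    (Complex.exp (θ₁ * Complex.I)) (Complex.exp (θ₂ * Complex.I)) w₂.trace w₂.det
    hne (Complex.exp_ne_zero _) (Complex.exp_ne_zero _) hdet
    (by linear_combination E00) (by linear_combination E01)
    (by linear_combination E10) (by linear_combination E11)
    (by linear_combination G00) (by linear_combination G01)
    (by linear_combination G10) (by linear_combination G11)
    (by rw [Matrix.trace_fin_two]; linear_combination htrB)
  calc Complex.exp ((θ₁ + θ₂) * Complex.I)
      = Complex.exp (θ₁ * Complex.I) * Complex.exp (θ₂ * Complex.I) := by
        rw [← Complex.exp_add]; push_cast; ring_nf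
    _ = 1 := key

end
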